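/- Fix x ∈ ℝ and ρ ∈ (−1,1), and for r ∈ (−1,1) let f(r, y) = (2π(1−r²))^{−1/2} · exp( −(y − r x)² / (2(1−r²)) ) be the density of the normal distribution N(r x, 1−r²) at y. Then the Fisher information of ρ from this family satisfies ∫_ℝ ( ∂/∂r [ ln f(r, y) ] |_{r=ρ} )² · f(ρ, y) dy = ( (1 − ρ²)·x² + 2ρ² ) / (1 − ρ²)². -/

import Mathlib

/-!
Put `s = 1 - ρ²` and `z = y - ρx`. Then `log f(r, y) = -z²/(2s) - log(2πs)/2`, so the score
is `(x/s) z - (ρ/s²)(z² - s)`. After the shift `y ↦ z` the Fisher information is the second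
moment of this quadratic under `N(0, s)`, computed from `E z² = s`, `E z⁴ = 3s²` (integration
by parts) and the vanishing of the odd moments.
-/

set_option autoImplicit false

open MeasureTheory

/-- The conditional density of `Y` given `X = x` in the bivariate normal model
`Y = rX + √(1-r²)Z`: the density of `N(rx, 1-r²)` at `y`. -/
noncomputable def condDensity (x r y : ℝ) : ℝ :=
  Real.exp (-(y - r * x) ^ 2 / (2 * (1 - r ^ 2))) / Real.sqrt (2 * Real.pi * (1 - r ^ 2))

open Real

section GaussianMoments

variable {b : ℝ}

lemma integrable_pow_mul_exp_neg_mul_sq (hb : 0 < b) (n : ℕ) :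
    Integrable fun z : ℝ => z ^ n * exp (-b * z ^ 2) := by
  simpa [rpow_natCast] using
    integrable_rpow_mul_exp_neg_mul_sq hb (by linarith [n.cast_nonneg (α := ℝ)] : (-1 : ℝ) < n)

lemma integral_pow_mul_exp_neg_mul_sq_of_odd {n : ℕ} (hn : Odd n) :
    ∫ z : ℝ, z ^ n * exp (-b * z ^ 2) = 0 := by
  have h := integral_neg_eq_self (fun z : ℝ => z ^ n * exp (-b * z ^ 2)) volume
  simp only [hn.neg_pow, neg_sq, neg_mul, integral_neg] at h ⊢
  linarith

lemma integral_pow_add_two_mul_exp_neg_mul_sq (hb : 0 < b) (k : ℕ) :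
    ∫ z : ℝ, z ^ (k + 2) * exp (-b * z ^ 2)
      = (k + 1) / (2 * b) * ∫ z : ℝ, z ^ k * exp (-b * z ^ 2) := by
  have hk := (integrable_pow_mul_exp_neg_mul_sq hb k).const_mul (k + 1 : ℝ)
  have hk2 := (integrable_pow_mul_exp_neg_mul_sq hb (k + 2)).const_mul (2 * b)
  have hderiv (z : ℝ) : HasDerivAt (fun z => z ^ (k + 1) * exp (-b * z ^ 2))
      ((k + 1) * (z ^ k * exp (-b * z ^ 2)) - 2 * b * (z ^ (k + 2) * exp (-b * z ^ 2))) z := by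
    refine ((hasDerivAt_pow (k + 1) z).fun_mul
      (((hasDerivAt_pow 2 z).const_mul (-b)).exp)).congr_deriv ?_
    push_cast
    ring
  have h := integral_eq_zero_of_hasDerivAt_of_integrable hderiv (hk.sub hk2)
    (integrable_pow_mul_exp_neg_mul_sq hb (k + 1))
  rw [integral_sub hk hk2, integral_const_mul, integral_const_mul] at h
  rw [div_mul_eq_mul_div, eq_div_iff (by positivity)]
  linarith

end GaussianMoments

/-- In any smooth one-parameter family of laws `N(μ, v)`, the score at `y` is of the form
`a z + c (z² - v)` with `z = y - μ`. -/
lemma integral_score_sq_mul_exp {v : ℝ} (hv : 0 < v) (a c : ℝ) :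
    ∫ z : ℝ, (a * z + c * (z ^ 2 - v)) ^ 2 * exp (-z ^ 2 / (2 * v))
      = (a ^ 2 * v + 2 * c ^ 2 * v ^ 2) * √(2 * π * v) := by
  set b := (2 * v)⁻¹
  have hb : 0 < b := by positivity
  set M : ℕ → ℝ := fun k => ∫ z : ℝ, z ^ k * exp (-b * z ^ 2)
  have hM0 : M 0 = √(2 * π * v) := by
    simp only [M, pow_zero, one_mul, integral_gaussian, b]
    congr 1
    field_simp
  have hrec (k : ℕ) : M (k + 2) = (k + 1) * v * M k := by
    simp only [M]
    rw [integral_pow_add_two_mul_exp_neg_mul_sq hb k]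
    congr 1
    simp only [b]
    field_simp
  have hM1 : M 1 = 0 := integral_pow_mul_exp_neg_mul_sq_of_odd odd_one
  have hM2 : M 2 = v * M 0 := by simpa using hrec 0
  have hM3 : M 3 = 0 := integral_pow_mul_exp_neg_mul_sq_of_odd (by decide)
  have hM4 : M 4 = 3 * v ^ 2 * M 0 := by rw [hrec 2, hM2]; ring
  let coeff : Fin 5 → ℝ :=
    ![c ^ 2 * v ^ 2, -2 * a * c * v, a ^ 2 - 2 * c ^ 2 * v, 2 * a * c, c ^ 2]
  have hexpand (z : ℝ) : (a * z + c * (z ^ 2 - v)) ^ 2 * exp (-z ^ 2 / (2 * v))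
      = ∑ i : Fin 5, coeff i * (z ^ (i : ℕ) * exp (-b * z ^ 2)) := by
    rw [Fin.sum_univ_five, show -z ^ 2 / (2 * v) = -b * z ^ 2 by simp only [b]; field_simp]
    simp only [coeff, Matrix.cons_val, Fin.coe_ofNat_eq_mod, Nat.reduceMod]
    ring
  simp_rw [hexpand]
  rw [integral_finsetSum _ fun i _ => (integrable_pow_mul_exp_neg_mul_sq hb _).const_mul _,
    Fin.sum_univ_five]
  simp only [integral_const_mul]
  change c ^ 2 * v ^ 2 * M 0 + -2 * a * c * v * M 1 + (a ^ 2 - 2 * c ^ 2 * v) * M 2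
    + 2 * a * c * M 3 + c ^ 2 * M 4 = _
  rw [hM1, hM2, hM3, hM4, hM0]
  ring

lemma log_condDensity {x r : ℝ} (hr : r ∈ Set.Ioo (-1) 1) (y : ℝ) :
    log (condDensity x r y)
      = -(y - r * x) ^ 2 / (2 * (1 - r ^ 2)) - log (2 * π * (1 - r ^ 2)) / 2 := by
  have hs : 0 < 1 - r ^ 2 := by nlinarith [hr.1, hr.2]
  have hpos : 0 < 2 * π * (1 - r ^ 2) := by positivity
  rw [condDensity, log_div (exp_ne_zero _) (sqrt_ne_zero'.mpr hpos), log_exp, log_sqrt hpos.le]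

lemma deriv_log_condDensity {ρ : ℝ} (hρ : ρ ∈ Set.Ioo (-1) 1) (x y : ℝ) :
    deriv (fun r => log (condDensity x r y)) ρ
      = x / (1 - ρ ^ 2) * (y - ρ * x)
        + -ρ / (1 - ρ ^ 2) ^ 2 * ((y - ρ * x) ^ 2 - (1 - ρ ^ 2)) := by
  have hs : 1 - ρ ^ 2 ≠ 0 := by nlinarith [hρ.1, hρ.2]
  have hlog : (fun r => log (condDensity x r y)) =ᶠ[nhds ρ]
      fun r => -(y - r * x) ^ 2 / (2 * (1 - r ^ 2)) - log (2 * π * (1 - r ^ 2)) / 2 := by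
    filter_upwards [Ioo_mem_nhds hρ.1 hρ.2] with r hr using log_condDensity hr y
  rw [hlog.deriv_eq]
  have hvar : HasDerivAt (fun r : ℝ => 1 - r ^ 2) (-(2 * ρ)) ρ := by
    simpa using (hasDerivAt_pow 2 ρ).const_sub 1
  have hmean : HasDerivAt (fun r : ℝ => y - r * x) (-x) ρ := by
    simpa using ((hasDerivAt_id ρ).mul_const x).const_sub y
  have hderiv : HasDerivAt
      (fun r => -(y - r * x) ^ 2 / (2 * (1 - r ^ 2)) - log (2 * π * (1 - r ^ 2)) / 2) _ ρ :=
    ((hmean.pow 2).neg.div (hvar.const_mul 2) (by positivity)).sub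
      (((hvar.const_mul (2 * π)).log (by positivity)).div_const 2)
  rw [hderiv.deriv]
  simp only [Pi.neg_apply, Pi.pow_apply]
  field_simp
  ring

/-- the Fisher information of `ρ` from `Y | X = x` equals
`((1-ρ²) x² + 2ρ²) / (1-ρ²)²`. -/
theorem stmt18 (x ρ : ℝ) (hρ₁ : -1 < ρ) (hρ₂ : ρ < 1) :
    (∫ y, (deriv (fun r => Real.log (condDensity x r y)) ρ) ^ 2 * condDensity x ρ y)
      = ((1 - ρ ^ 2) * x ^ 2 + 2 * ρ ^ 2) / (1 - ρ ^ 2) ^ 2 := by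
  have hs : 0 < 1 - ρ ^ 2 := by nlinarith
  set s := 1 - ρ ^ 2
  calc ∫ y, (deriv (fun r => log (condDensity x r y)) ρ) ^ 2 * condDensity x ρ y
      = ∫ y, (fun z => (x / s * z + -ρ / s ^ 2 * (z ^ 2 - s)) ^ 2 * exp (-z ^ 2 / (2 * s)))
          (y - ρ * x) / √(2 * π * s) := by
        congr 1 with y
        rw [deriv_log_condDensity ⟨hρ₁, hρ₂⟩, condDensity, mul_div_assoc]
    _ = ((x / s) ^ 2 * s + 2 * (-ρ / s ^ 2) ^ 2 * s ^ 2) * √(2 * π * s) / √(2 * π * s) := by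
        rw [integral_div, integral_sub_right_eq_self
          (fun z => (x / s * z + -ρ / s ^ 2 * (z ^ 2 - s)) ^ 2 * exp (-z ^ 2 / (2 * s))),
          integral_score_sq_mul_exp hs]
    _ = (s * x ^ 2 + 2 * ρ ^ 2) / s ^ 2 := by
        have : √(2 * π * s) ≠ 0 := by positivity
        field_simp
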